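/- Assume that a^V_{k0} > 0 and a^V_{k1} > 0 for all k = 1,…,K (no separation in the validation set), and that min(a_{k0}, a_{k1}) = 0 with max(a_{k0}, a_{k1}) = a_{k•} > 0 for all k = 1,…,K (complete separation in the original data). Then there exists δ > 0 such that PE^V(λ) < PE^V(0) for all λ ∈ (0, δ); in particular the validation squared prediction error PE^V is not minimized at λ = 0. -/

import Mathlib

/-- Validation squared prediction error: training counts `a0, a1`, validation counts
`av0, av1`, ridge probability estimate `π̂_k(λ) = (a_{k1} + 2λ)/(a_{k•} + 4λ)`. -/
noncomputable def validPE (K : ℕ) (a0 a1 av0 av1 : Fin K → ℕ) (l : ℝ) : ℝ :=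
  (1 / ∑ k : Fin K, ((av0 k : ℝ) + (av1 k : ℝ))) *
    ∑ k : Fin K,
      ((av0 k : ℝ) *
          (((a1 k : ℝ) + 2 * l) / ((a0 k : ℝ) + (a1 k : ℝ) + 4 * l)) ^ 2 +
       (av1 k : ℝ) *
          (1 - ((a1 k : ℝ) + 2 * l) / ((a0 k : ℝ) + (a1 k : ℝ) + 4 * l)) ^ 2)

/-! Under complete separation the unpenalized estimate of every cell is `0` or `1`. For a cell
with `A` validation zeros and `B` validation ones, moving the estimate from `0` to `p` changes its
squared error by `p * ((A + B) * p - 2 * B)` (from `1` to `1 - p`: the same with `A`, `B`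
swapped), which is negative for small `p > 0` since `A, B ≥ 1`. The ridge penalty moves the
estimate inwards by `p = 2λ / (a_{k•} + 4λ) ≤ 2λ`. -/

noncomputable def ridgeEstimate (n0 n1 l : ℝ) : ℝ :=
  (n1 + 2 * l) / (n0 + n1 + 4 * l)

def cellError (A B π : ℝ) : ℝ :=
  A * π ^ 2 + B * (1 - π) ^ 2

theorem validPE_eq_sum_cellError (K : ℕ) (a0 a1 av0 av1 : Fin K → ℕ) (l : ℝ) :
    validPE K a0 a1 av0 av1 l =
      (1 / ∑ k : Fin K, ((av0 k : ℝ) + (av1 k : ℝ))) *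
        ∑ k : Fin K, cellError (av0 k) (av1 k) (ridgeEstimate (a0 k) (a1 k) l) :=
  rfl

theorem ridgeEstimate_zero_left {n l : ℝ} (h : n + 4 * l ≠ 0) :
    ridgeEstimate 0 n l = 1 - 2 * l / (n + 4 * l) := by
  rw [ridgeEstimate, eq_sub_iff_add_eq, zero_add, ← add_div, div_eq_one_iff_eq h]
  ring

theorem ridgeEstimate_zero_right (n l : ℝ) :
    ridgeEstimate n 0 l = 2 * l / (n + 4 * l) := by
  simp [ridgeEstimate]

theorem cellError_one_sub (A B p : ℝ) : cellError A B (1 - p) = cellError B A p := by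
  unfold cellError
  ring

theorem cellError_lt_cellError_zero {A B p : ℝ} (hp : 0 < p) (h : (A + B) * p < 2 * B) :
    cellError A B p < cellError A B 0 := by
  unfold cellError
  nlinarith [mul_pos hp (sub_pos.2 h)]

theorem div_add_four_mul_le {n l : ℝ} (hn : 1 ≤ n) (hl : 0 < l) :
    2 * l / (n + 4 * l) ≤ 2 * l := by
  rw [div_le_iff₀ (by linarith)]
  nlinarith

theorem cellError_shrink_lt {A B n l : ℝ} (hAB : 0 ≤ A + B) (hB : 1 ≤ B) (hn : 1 ≤ n)
    (hl : 0 < l) (hsmall : l * (A + B) < 1) :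
    cellError A B (2 * l / (n + 4 * l)) < cellError A B 0 := by
  apply cellError_lt_cellError_zero (div_pos (by linarith) (by linarith))
  calc (A + B) * (2 * l / (n + 4 * l)) ≤ (A + B) * (2 * l) :=
        mul_le_mul_of_nonneg_left (div_add_four_mul_le hn hl) hAB
    _ < 2 * B := by linarith

theorem cellError_ridgeEstimate_lt {n0 n1 : ℕ} (hsep : min n0 n1 = 0) (hpos : 0 < n0 + n1)
    {A B l : ℝ} (hA : 1 ≤ A) (hB : 1 ≤ B) (hl : 0 < l) (hsmall : l * (A + B) < 1) :
    cellError A B (ridgeEstimate n0 n1 l) < cellError A B (ridgeEstimate n0 n1 0) := by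
  rcases Nat.min_eq_zero_iff.1 hsep with rfl | rfl
  · have hn : (1 : ℝ) ≤ n1 := by exact_mod_cast (by omega : 1 ≤ n1)
    rw [Nat.cast_zero, ridgeEstimate_zero_left (by linarith),
      ridgeEstimate_zero_left (by linarith), cellError_one_sub, cellError_one_sub,
      mul_zero, zero_div]
    exact cellError_shrink_lt (by linarith) hA hn hl (by linarith)
  · have hn : (1 : ℝ) ≤ n0 := by exact_mod_cast (by omega : 1 ≤ n0)
    rw [Nat.cast_zero, ridgeEstimate_zero_right, ridgeEstimate_zero_right, mul_zero, zero_div]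
    exact cellError_shrink_lt (by linarith) hB hn hl hsmall

theorem validPE_lt_validPE_zero {K : ℕ} (hK : 1 ≤ K) {a0 a1 av0 av1 : Fin K → ℕ}
    (hv : ∀ k, 0 < av0 k ∧ 0 < av1 k) (hsep : ∀ k, min (a0 k) (a1 k) = 0)
    (hpos : ∀ k, 0 < a0 k + a1 k) {l : ℝ} (hl : 0 < l)
    (hsmall : l * ∑ k : Fin K, ((av0 k : ℝ) + (av1 k : ℝ)) < 1) :
    validPE K a0 a1 av0 av1 l < validPE K a0 a1 av0 av1 0 := by
  set T : ℝ := ∑ k : Fin K, ((av0 k : ℝ) + (av1 k : ℝ))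
  have hcount : ∀ k, (1 : ℝ) ≤ av0 k ∧ (1 : ℝ) ≤ av1 k := fun k =>
    ⟨by exact_mod_cast (hv k).1, by exact_mod_cast (hv k).2⟩
  have hle : ∀ k, (av0 k : ℝ) + av1 k ≤ T := fun k =>
    Finset.single_le_sum (f := fun k => (av0 k : ℝ) + av1 k) (fun _ _ => by positivity)
      (Finset.mem_univ k)
  have hT : 0 < T := by
    have := hcount ⟨0, hK⟩
    linarith [hle ⟨0, hK⟩]
  rw [validPE_eq_sum_cellError, validPE_eq_sum_cellError]
  refine mul_lt_mul_of_pos_left (Finset.sum_lt_sum_of_nonempty ⟨⟨0, hK⟩, Finset.mem_univ _⟩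
    fun k _ => ?_) (by positivity)
  exact cellError_ridgeEstimate_lt (hsep k) (hpos k) (hcount k).1 (hcount k).2 hl
    (lt_of_le_of_lt (mul_le_mul_of_nonneg_left (hle k) hl.le) hsmall)

/-- No separation in the validation set and complete separation in the original data:
the validation squared prediction error is strictly below its value at `0` on some
right-neighborhood of `0`; in particular it is not minimized at `λ = 0`. -/
theorem stmt17 (K : ℕ) (hK : 1 ≤ K) (a0 a1 av0 av1 : Fin K → ℕ)
    (hv : ∀ k, 0 < av0 k ∧ 0 < av1 k)
    (hs : ∀ k, min (a0 k) (a1 k) = 0 ∧ max (a0 k) (a1 k) = a0 k + a1 k ∧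
      0 < a0 k + a1 k) :
    (∃ δ : ℝ, 0 < δ ∧ ∀ l : ℝ, 0 < l → l < δ →
      validPE K a0 a1 av0 av1 l < validPE K a0 a1 av0 av1 0) ∧
    ¬ (∀ l : ℝ, 0 ≤ l →
        validPE K a0 a1 av0 av1 0 ≤ validPE K a0 a1 av0 av1 l) := by
  set T : ℝ := ∑ k : Fin K, ((av0 k : ℝ) + (av1 k : ℝ))
  have hT : 0 < T := Finset.sum_pos (fun k _ => by have := (hv k).1; positivity)
    ⟨⟨0, hK⟩, Finset.mem_univ _⟩
  have hdecrease : ∀ l : ℝ, 0 < l → l < 1 / T →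
      validPE K a0 a1 av0 av1 l < validPE K a0 a1 av0 av1 0 := fun l hl hlT =>
    validPE_lt_validPE_zero hK hv (fun k => (hs k).1) (fun k => (hs k).2.2) hl
      (by rwa [lt_div_iff₀ hT] at hlT)
  refine ⟨⟨1 / T, by positivity, hdecrease⟩, fun hmin => ?_⟩
  have hδ : 0 < 1 / T := by positivity
  linarith [hdecrease (1 / T / 2) (by positivity) (by linarith), hmin (1 / T / 2) (by positivity)]
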